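/- arXiv:2510.14884 — 3 statements merged into one kernel-verified Lean document; each statement's English description precedes it below -/
import Mathlib

section
/- Let n ≥ 1, L > 0, and let ν be a probability measure on ℝⁿ such that the expected norm is infinite, i.e., ∫ ‖x‖ dν(x) = ∞ (the function x ↦ ‖x‖ is not integrable, with lower integral +∞). Define the commit reward r(x) = 1 − L‖x‖ and the abstain reward 0, and the per-round regret at input x under action y ∈ {abstain, commit} as max(r(x), 0) − (r(x) if y = commit, 0 if y = abstain). Then for any horizon T ≥ 1 and any measurable action rule y : (ℝⁿ)^T → {abstain, commit}^T that always commits on the first round (y(x)₁ = commit for all input sequences x), the expected total regret over T i.i.d. rounds with inputs drawn from ν is infinite: ∫ Σ_{t=1}^T [max(r(x_t),0) − (r(x_t) if y(x)_t = commit else 0)] d(ν^{⊗T})(x) = +∞. -/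
/-!
Committing on an input `x` costs regret `max (L‖x‖ - 1) 0`, and all per-round regrets are
nonnegative, so the total regret dominates that of the forced commitment in round `0`. Since the
first coordinate of `ν^{⊗T}` is distributed as `ν`, the expected total regret is at least
`∫⁻ (L‖x‖ - 1)⁺ dν`, which is infinite because `ν` has infinite expected norm and finite mass.
-/

open MeasureTheory

def regret (r : ℝ) (commit : Bool) : ℝ := max r 0 - if commit then r else 0

lemma regret_nonneg (r : ℝ) (commit : Bool) : 0 ≤ regret r commit := by
  cases commit <;> simp [regret]

lemma regret_true (r : ℝ) : regret r true = max (-r) 0 := by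
  simp only [regret, if_true]
  rcases le_total r 0 with h | h
  · rw [max_eq_right h, max_eq_left (by linarith)]; ring
  · rw [max_eq_left h, max_eq_right (by linarith)]; ring

lemma regret_le_sum_regret {ι : Type*} [Fintype ι] (r : ι → ℝ) (a : ι → Bool) (i : ι) :
    regret (r i) (a i) ≤ ∑ t, regret (r t) (a t) :=
  Finset.single_le_sum (fun t _ => regret_nonneg (r t) (a t)) (Finset.mem_univ i)

lemma lintegral_ofReal_sub_const_eq_top {α : Type*} [MeasurableSpace α] {μ : Measure α}
    [IsFiniteMeasure μ] {f : α → ℝ} (hf : ∫⁻ x, ENNReal.ofReal (f x) ∂μ = ⊤) (c : ℝ) :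
    ∫⁻ x, ENNReal.ofReal (f x - c) ∂μ = ⊤ := by
  have hle : ∫⁻ x, ENNReal.ofReal (f x) ∂μ ≤
      ∫⁻ x, ENNReal.ofReal (f x - c) ∂μ + ENNReal.ofReal c * μ Set.univ := by
    rw [← lintegral_const, ← lintegral_add_right _ measurable_const]
    refine lintegral_mono fun x => ?_
    calc ENNReal.ofReal (f x) = ENNReal.ofReal (f x - c + c) := by rw [sub_add_cancel]
      _ ≤ _ := ENNReal.ofReal_add_le
  rw [hf, top_le_iff, ENNReal.add_eq_top] at hle
  exact hle.resolve_right (ENNReal.mul_ne_top ENNReal.ofReal_ne_top (measure_ne_top μ _))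

lemma lintegral_ofReal_const_mul_eq_top {α : Type*} [MeasurableSpace α] {μ : Measure α}
    {f : α → ℝ} (hf : ∫⁻ x, ENNReal.ofReal (f x) ∂μ = ⊤) {L : ℝ} (hL : 0 < L) :
    ∫⁻ x, ENNReal.ofReal (L * f x) ∂μ = ⊤ := by
  simp_rw [ENNReal.ofReal_mul hL.le]
  rw [lintegral_const_mul' _ _ ENNReal.ofReal_ne_top, hf,
    ENNReal.mul_top (ENNReal.ofReal_pos.mpr hL).ne']

theorem stmt_0_general (n : ℕ) (L : ℝ) (hL : 0 < L)
    (ν : Measure (EuclideanSpace ℝ (Fin n))) [IsProbabilityMeasure ν]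
    (hnorm : ∫⁻ x, ENNReal.ofReal ‖x‖ ∂ν = ⊤)
    (T : ℕ) (hT : 0 < T)
    (y : (Fin T → EuclideanSpace ℝ (Fin n)) → Fin T → Bool)
    (hfirst : ∀ x, y x ⟨0, hT⟩ = true) :
    ∫⁻ x, ENNReal.ofReal
        (∑ t : Fin T,
          (max (1 - L * ‖x t‖) 0 - if y x t then 1 - L * ‖x t‖ else 0))
      ∂(Measure.pi fun _ : Fin T => ν) = ⊤ := by
  set i₀ : Fin T := ⟨0, hT⟩
  have hfirst_round : ∀ x : Fin T → EuclideanSpace ℝ (Fin n),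
      ENNReal.ofReal (L * ‖x i₀‖ - 1) ≤
        ENNReal.ofReal (∑ t, regret (1 - L * ‖x t‖) (y x t)) := by
    intro x
    calc ENNReal.ofReal (L * ‖x i₀‖ - 1) = ENNReal.ofReal (regret (1 - L * ‖x i₀‖) (y x i₀)) := by
          rw [hfirst x, regret_true, neg_sub, ENNReal.ofReal_max]; simp
      _ ≤ _ := ENNReal.ofReal_le_ofReal (regret_le_sum_regret (fun t => 1 - L * ‖x t‖) (y x) i₀)
  have hmarginal := measurePreserving_eval (fun _ : Fin T => ν) i₀
  refine top_le_iff.mp ?_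
  calc ⊤ = ∫⁻ z, ENNReal.ofReal (L * ‖z‖ - 1) ∂ν :=
        (lintegral_ofReal_sub_const_eq_top (lintegral_ofReal_const_mul_eq_top hnorm hL) 1).symm
    _ = ∫⁻ x, ENNReal.ofReal (L * ‖x i₀‖ - 1) ∂(Measure.pi fun _ : Fin T => ν) :=
        (hmarginal.lintegral_comp (by fun_prop)).symm
    _ ≤ _ := lintegral_mono hfirst_round

/-- **The need for caution.** If the input distribution `ν` on `ℝⁿ` has infinite expected
norm (lower integral of the norm is `⊤`), then with commit reward `r x = 1 - L‖x‖` and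
abstain reward `0`, any measurable action rule over a horizon `T` that always commits on
the first round has infinite expected total regret under i.i.d. inputs from `ν`. -/
theorem stmt_0 (n : ℕ) (hn : 1 ≤ n) (L : ℝ) (hL : 0 < L)
    (ν : Measure (EuclideanSpace ℝ (Fin n))) [IsProbabilityMeasure ν]
    (hnorm : ∫⁻ x, ENNReal.ofReal ‖x‖ ∂ν = ⊤)
    (T : ℕ) (hT : 0 < T)
    (y : (Fin T → EuclideanSpace ℝ (Fin n)) → Fin T → Bool)
    (hy : Measurable y)
    (hfirst : ∀ x, y x ⟨0, hT⟩ = true) :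
    ∫⁻ x, ENNReal.ofReal
        (∑ t : Fin T,
          (max (1 - L * ‖x t‖) 0 - if y x t then 1 - L * ‖x t‖ else 0))
      ∂(Measure.pi fun _ : Fin T => ν) = ⊤ :=
  stmt_0_general n L hL ν hnorm T hT y hfirst
end

section
/- Let n ≥ 1, L > 0, and let T be a natural number with L·T > 1. Let x₁,…,x_T ∈ ℝⁿ satisfy ‖x_t‖ = T for every t, and let y₁,…,y_T ∈ {abstain, commit} be any action sequence. Define two reward functions for committing: r⁺(x) = 1 and r⁻(x) = 1 − L‖x‖ (abstaining gives reward 0 in both cases). Define Reg⁺ = Σ_{t=1}^T [max(r⁺(x_t),0) − (r⁺(x_t) if y_t = commit else 0)] and Reg⁻ = Σ_{t=1}^T [max(r⁻(x_t),0) − (r⁻(x_t) if y_t = commit else 0)]. Then max(Reg⁺, Reg⁻) ≥ min(L·T − 1, T). -/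
open Finset

def roundRegret (r : ℝ) (b : Bool) : ℝ := max r 0 - if b then r else 0

lemma roundRegret_of_nonneg {r : ℝ} (hr : 0 ≤ r) (b : Bool) :
    roundRegret r b = if b then 0 else r := by
  cases b <;> simp [roundRegret, hr]

lemma roundRegret_of_nonpos {r : ℝ} (hr : r ≤ 0) (b : Bool) :
    roundRegret r b = if b then -r else 0 := by
  cases b <;> simp [roundRegret, hr]

/-- Abstaining in every round costs one unit per round; committing even once costs `a`. -/
lemma min_le_max_sum_abstain_sum_commit {ι : Type*} [Fintype ι] (y : ι → Bool) {a : ℝ}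
    (ha : 0 ≤ a) :
    min a (Fintype.card ι : ℝ) ≤
      max (∑ t, if y t then 0 else 1) (∑ t, if y t then a else 0) := by
  by_cases hcommit : ∃ t, y t = true
  · obtain ⟨t₀, ht₀⟩ := hcommit
    have hsum : a ≤ ∑ t, if y t then a else 0 := by
      simpa [ht₀] using single_le_sum (f := fun t => if y t then a else 0)
        (fun t _ => by split_ifs <;> simp [ha]) (mem_univ t₀)
    exact (min_le_left _ _).trans (le_max_of_le_right hsum)
  · have habstain : ∀ t, y t = false := by simpa using hcommit
    refine (min_le_right _ _).trans (le_max_of_le_left ?_)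
    simp [habstain]

theorem stmt_1_general (n : ℕ) (L : ℝ)
    (T : ℕ) (hLT : 1 < L * T)
    (x : Fin T → EuclideanSpace ℝ (Fin n))
    (hx : ∀ t, ‖x t‖ = (T : ℝ))
    (y : Fin T → Bool) :
    min (L * T - 1) (T : ℝ) ≤
      max (∑ t : Fin T, (max (1 : ℝ) 0 - if y t then (1 : ℝ) else 0))
          (∑ t : Fin T, (max (1 - L * ‖x t‖) 0 - if y t then 1 - L * ‖x t‖ else 0)) := by
  change _ ≤ max (∑ t, roundRegret 1 (y t)) (∑ t, roundRegret (1 - L * ‖x t‖) (y t))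
  have hneg : 1 - L * T ≤ 0 := by linarith
  simp only [hx, roundRegret_of_nonneg zero_le_one, roundRegret_of_nonpos hneg, neg_sub]
  simpa using min_le_max_sum_abstain_sum_commit y (a := L * T - 1) (by linarith)

/-- **The limits of caution (deterministic core).** If every input lies at distance `T`
from the origin and `L·T > 1`, then for any action sequence `y` (where `true` = commit,
`false` = abstain), the larger of the regrets against the commit-reward functions
`r⁺(x) = 1` and `r⁻(x) = 1 - L‖x‖` is at least `min (L·T - 1) T`. -/
theorem stmt_1 (n : ℕ) (hn : 1 ≤ n) (L : ℝ) (hL : 0 < L)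
    (T : ℕ) (hLT : 1 < L * T)
    (x : Fin T → EuclideanSpace ℝ (Fin n))
    (hx : ∀ t, ‖x t‖ = (T : ℝ))
    (y : Fin T → Bool) :
    min (L * T - 1) (T : ℝ) ≤
      max (∑ t : Fin T, (max (1 : ℝ) 0 - if y t then (1 : ℝ) else 0))
          (∑ t : Fin T, (max (1 - L * ‖x t‖) 0 - if y t then 1 - L * ‖x t‖ else 0)) :=
  stmt_1_general n L T hLT x hx y
end

section
/- Let A > 0, w > 0, L ≥ 0, R ≥ 0, and let n ≥ 1 be a natural number. Let μ ∈ ℝ satisfy −L·R ≤ μ and μ < −(2L√n + 1)·w. Then (1 + 16A/μ²) · 2|μ| ≤ 2L·R + 32A/w. -/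
/-- **Per-bin commit regret (quantitative core).** If `-L·R ≤ μ` and
`μ < -(2L√n + 1)·w`, then `(1 + 16A/μ²) · 2|μ| ≤ 2LR + 32A/w`. -/
theorem stmt_5 (A w L R : ℝ) (n : ℕ) (hA : 0 < A) (hw : 0 < w) (hL : 0 ≤ L)
    (hR : 0 ≤ R) (hn : 1 ≤ n) (μ : ℝ)
    (hμlow : -(L * R) ≤ μ) (hμhigh : μ < -((2 * L * Real.sqrt n + 1) * w)) :
    (1 + 16 * A / μ ^ 2) * (2 * |μ|) ≤ 2 * L * R + 32 * A / w := by
  have hs : 0 ≤ Real.sqrt n := Real.sqrt_nonneg _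
  have hwμ : w ≤ -μ := by nlinarith [mul_nonneg (mul_nonneg hL hs) hw.le]
  have hμpos : 0 < -μ := lt_of_lt_of_le hw hwμ
  have hμneg : μ < 0 := by linarith
  have habs : |μ| = -μ := abs_of_neg hμneg
  have hμ2 : μ ^ 2 = (-μ) * (-μ) := by ring
  have h1 : (1 : ℝ) * (2 * |μ|) ≤ 2 * L * R := by
    rw [habs]; nlinarith
  have h2 : (16 * A / μ ^ 2) * (2 * |μ|) ≤ 32 * A / w := by
    rw [habs, hμ2]
    rw [div_mul_eq_mul_div, div_le_div_iff₀ (mul_pos hμpos hμpos) hw]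
    nlinarith [mul_nonneg hA.le (mul_nonneg hμpos.le (sub_nonneg.mpr hwμ))]
  calc (1 + 16 * A / μ ^ 2) * (2 * |μ|)
      = 1 * (2 * |μ|) + (16 * A / μ ^ 2) * (2 * |μ|) := by ring
    _ ≤ 2 * L * R + 32 * A / w := add_le_add h1 h2
end
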